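/- arXiv:1304.0900 — 4 statements merged into one kernel-verified Lean document; each statement's English description precedes it below -/
import Mathlib

section
/- Let m ≥ 2 and t ≥ 2 be natural numbers and v_1, …, v_t natural numbers with 1 ≤ v_i ≤ m − 1. Set S = v_1 + ⋯ + v_t and b = 1 + S − (m − 1)(t − 1). If (S + t)/(1 + S) < m/(m − 1), then 0 < b ≤ m and (S + t)/(1 + S) = 1 + 1/((m − 1) + b/(t − 1)). -/
theorem stmt1 (m t : ℕ) (hm : 2 ≤ m) (ht : 2 ≤ t) (v : Fin t → ℕ)
    (hv : ∀ i, 1 ≤ v i ∧ v i ≤ m - 1)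
    (S : ℕ) (hS : S = ∑ i, v i)
    (b : ℤ) (hb : b = 1 + (S : ℤ) - ((m : ℤ) - 1) * ((t : ℤ) - 1))
    (h : ((S : ℚ) + t) / (1 + S) < (m : ℚ) / ((m : ℚ) - 1)) :
    0 < b ∧ b ≤ m ∧
    ((S : ℚ) + t) / (1 + S) = 1 + 1 / (((m : ℚ) - 1) + (b : ℚ) / ((t : ℚ) - 1)) := by
  have hSt : t ≤ S := by
    rw [hS]
    calc (t : ℕ) = ∑ _i : Fin t, 1 := by simp
      _ ≤ ∑ i, v i := Finset.sum_le_sum (fun i _ => (hv i).1)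
  have hSm : S ≤ t * (m - 1) := by
    rw [hS]
    calc ∑ i, v i ≤ ∑ _i : Fin t, (m - 1) := Finset.sum_le_sum (fun i _ => (hv i).2)
      _ = t * (m - 1) := by simp [Finset.sum_const, mul_comm]
  have hm1 : (1:ℚ) < (m:ℚ) := by exact_mod_cast hm.trans_lt' one_lt_two
  have hden1 : (0:ℚ) < 1 + (S:ℚ) := by positivity
  have hden2 : (0:ℚ) < (m:ℚ) - 1 := by linarith
  rw [div_lt_div_iff₀ hden1 hden2] at h
  have hZ : ((S:ℤ) + t) * ((m:ℤ) - 1) < (m:ℤ) * (1 + S) := by exact_mod_cast h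
  have hSmZ : (S:ℤ) ≤ (t:ℤ) * ((m:ℤ) - 1) := by
    have := hSm
    have h1 : (1:ℕ) ≤ m := by omega
    have : (S:ℤ) ≤ (t:ℤ) * ((m - 1 : ℕ) : ℤ) := by exact_mod_cast this
    rwa [Nat.cast_sub h1, Nat.cast_one] at this
  have hbpos : 0 < b := by nlinarith
  have hbm : b ≤ m := by nlinarith
  refine ⟨hbpos, hbm, ?_⟩
  have ht1 : (0:ℚ) < (t:ℚ) - 1 := by
    have : (2:ℚ) ≤ t := by exact_mod_cast ht
    linarith
  have hbQ : (b:ℚ) = 1 + S - ((m:ℚ) - 1) * ((t:ℚ) - 1) := by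
    rw [hb]; push_cast; ring
  have hkey : ((m:ℚ) - 1) + (b:ℚ) / ((t:ℚ) - 1) = (1 + S) / ((t:ℚ) - 1) := by
    field_simp
    linarith [hbQ]
  rw [hkey]
  field_simp
  ring
end

section
/- Let m ≥ 2, n ≥ 1 be natural numbers, and let t, v be natural numbers satisfying t ≥ n, v ≥ (m − 1)n + 1, and v ≤ (m − 1)t + 1. Then (v + t − 1)/v ≥ (m·n)/((m − 1)·n + 1). -/
theorem stmt4 (m n t v : ℕ) (hm : 2 ≤ m) (hn : 1 ≤ n) (htn : n ≤ t)
    (hv1 : (m - 1) * n + 1 ≤ v) (hv2 : v ≤ (m - 1) * t + 1) :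
    ((m : ℚ) * n) / (((m : ℚ) - 1) * n + 1) ≤ ((v : ℚ) + t - 1) / v := by
  obtain ⟨a, rfl⟩ : ∃ a, m = a + 2 := ⟨m - 2, by omega⟩
  have e : a + 2 - 1 = a + 1 := rfl
  rw [e] at hv1 hv2
  have h1 : ((a : ℚ) + 1) * n + 1 ≤ v := by exact_mod_cast hv1
  have h2 : (v : ℚ) ≤ ((a : ℚ) + 1) * t + 1 := by exact_mod_cast hv2
  have h3 : (n : ℚ) ≤ t := by exact_mod_cast htn
  have hn1 : (1 : ℚ) ≤ n := by exact_mod_cast hn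
  have ha : (0:ℚ) ≤ a := Nat.cast_nonneg a
  have hv0 : (0 : ℚ) < v := by nlinarith
  have hd : (0 : ℚ) < ((a : ℚ) + 2 - 1) * n + 1 := by
    nlinarith
  push_cast
  rw [div_le_div_iff₀ hd hv0]
  nlinarith [mul_nonneg (by linarith : (0:ℚ) ≤ ((a:ℚ)+1)*t + 1 - v) (by nlinarith : (0:ℚ) ≤ ((a:ℚ)+1)*n + 1),
             mul_nonneg (by linarith : (0:ℚ) ≤ (v:ℚ) - (((a:ℚ)+1)*n + 1)) (by linarith : (0:ℚ) ≤ (a:ℚ)+2)]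
end

section
/- Let H be a finite graph, let x and y be two distinct vertices of H, and let G be obtained from H by adding a path with t ≥ 1 new internal vertices y_1, …, y_t and the t + 1 new edges {x, y_1}, {y_1, y_2}, …, {y_{t−1}, y_t}, {y_t, y}. Let 0 < α < 1. Then the pair (G, H) is α-safe if and only if α < t/(t + 1). -/
theorem stmt10 {V : Type*} [Fintype V] (Γ : SimpleGraph V) (α : ℝ)
    (hα0 : 0 < α) (hα1 : α < 1)
    (H G : Γ.Subgraph) (hHG : H ≤ G)
    (t : ℕ) (ht : 1 ≤ t)
    (q : Fin (t + 2) → V) (hq : Function.Injective q)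
    (hx : q 0 ∈ H.verts) (hy : q (Fin.last (t + 1)) ∈ H.verts)
    (hnew : ∀ i : Fin (t + 2), i ≠ 0 → i ≠ Fin.last (t + 1) → q i ∉ H.verts)
    (hverts : G.verts = H.verts ∪ Set.range q)
    (hedges : G.edgeSet = H.edgeSet ∪ {e | ∃ i : Fin (t + 1), e = s(q i.castSucc, q i.succ)})
    (f : Γ.Subgraph → Γ.Subgraph → ℝ)
    (hf : ∀ A B, f A B =
      ((A.verts \ B.verts).ncard : ℝ) - α * ((A.edgeSet \ B.edgeSet).ncard)) :
    (∀ S, H < S → S ≤ G → 0 < f S H) ↔ α < (t : ℝ) / (t + 1) := by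
  classical
  set e : Fin (t + 1) → Sym2 V := fun i => s(q i.castSucc, q i.succ) with he
  have hlastval : (Fin.last (t + 1)).val = t + 1 := rfl
  have h0last : (0 : Fin (t + 2)) ≠ Fin.last (t + 1) := by
    intro h; have := congrArg Fin.val h; simp at this
  -- injectivity of the edge map
  have heinj : Function.Injective e := by
    intro a b hab
    simp only [he, Sym2.eq_iff] at hab
    rcases hab with ⟨h1, h2⟩ | ⟨h1, h2⟩
    · have := hq h1
      have hv : a.castSucc.val = b.castSucc.val := congrArg Fin.val this
      simp [Fin.coe_castSucc] at hv
      exact Fin.ext hv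
    · have e1 := hq h1; have e2 := hq h2
      have hv1 : a.castSucc.val = b.succ.val := congrArg Fin.val e1
      have hv2 : a.succ.val = b.castSucc.val := congrArg Fin.val e2
      simp [Fin.coe_castSucc, Fin.val_succ] at hv1 hv2
      omega
  -- path edges are not in H
  have hnotH : ∀ i : Fin (t + 1), e i ∉ H.edgeSet := by
    intro i hi
    rw [he] at hi
    have hadj : H.Adj (q i.castSucc) (q i.succ) := SimpleGraph.Subgraph.mem_edgeSet.mp hi
    by_cases h0 : i = 0
    · have hival : i.val = 0 := by rw [h0]; rfl
      refine hnew i.succ (Fin.succ_ne_zero _) ?_ hadj.snd_mem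
      intro hcon
      have := congrArg Fin.val hcon
      simp [Fin.val_succ, hival, hlastval] at this
      omega
    · have : i.castSucc ≠ 0 := by
        intro h; apply h0; exact Fin.ext (by simpa using congrArg Fin.val h)
      exact hnew i.castSucc this (Fin.castSucc_lt_last i).ne hadj.fst_mem
  set J : Γ.Subgraph → Set (Fin (t + 2)) :=
    fun S => {i | q i ∈ S.verts ∧ i ≠ 0 ∧ i ≠ Fin.last (t + 1)} with hJ
  set I : Γ.Subgraph → Set (Fin (t + 1)) := fun S => {i | e i ∈ S.edgeSet} with hI
  -- endpoints of edges of S are vertices of S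
  have hend : ∀ S : Γ.Subgraph, ∀ i : Fin (t + 1), i ∈ I S →
      q i.castSucc ∈ S.verts ∧ q i.succ ∈ S.verts := by
    intro S i hi
    have hadj : S.Adj (q i.castSucc) (q i.succ) := SimpleGraph.Subgraph.mem_edgeSet.mp hi
    exact ⟨hadj.fst_mem, hadj.snd_mem⟩
  -- new vertices of S
  have hNV : ∀ S : Γ.Subgraph, S ≤ G → S.verts \ H.verts = q '' J S := by
    intro S hSG
    ext v
    constructor
    · rintro ⟨hvS, hvH⟩
      have hvG : v ∈ G.verts := hSG.1 hvS
      rw [hverts] at hvG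
      rcases hvG with h | ⟨i, rfl⟩
      · exact absurd h hvH
      refine ⟨i, ⟨hvS, ?_, ?_⟩, rfl⟩
      · rintro rfl; exact hvH hx
      · rintro rfl; exact hvH hy
    · rintro ⟨i, ⟨hiS, hi0, hil⟩, rfl⟩
      exact ⟨hiS, hnew i hi0 hil⟩
  -- new edges of S
  have hNE : ∀ S : Γ.Subgraph, S ≤ G → S.edgeSet \ H.edgeSet = e '' I S := by
    intro S hSG
    ext a
    constructor
    · rintro ⟨haS, haH⟩
      have haG : a ∈ G.edgeSet := (SimpleGraph.Subgraph.edgeSet_mono hSG) haS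
      rw [hedges] at haG
      rcases haG with h | ⟨i, rfl⟩
      · exact absurd h haH
      exact ⟨i, haS, rfl⟩
    · rintro ⟨i, hi, rfl⟩
      exact ⟨hi, hnotH i⟩
  -- the value of f
  have hff : ∀ S : Γ.Subgraph, S ≤ G →
      f S H = ((J S).ncard : ℝ) - α * ((I S).ncard : ℝ) := by
    intro S hSG
    rw [hf, hNV S hSG, hNE S hSG, Set.ncard_image_of_injective _ hq,
      Set.ncard_image_of_injective _ heinj]
  have hcastmem : ∀ S : Γ.Subgraph, ∀ i : Fin (t + 1), i ∈ I S → i ≠ 0 →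
      i.castSucc ∈ J S := by
    intro S i hi hi0
    refine ⟨(hend S i hi).1, ?_, (Fin.castSucc_lt_last i).ne⟩
    intro h; apply hi0; exact Fin.ext (by simpa using congrArg Fin.val h)
  have hsub : ∀ S : Γ.Subgraph, Fin.castSucc '' (I S \ {0}) ⊆ J S := by
    rintro S a ⟨i, ⟨hiI, hi0⟩, rfl⟩
    exact hcastmem S i hiI (by simpa using hi0)
  have hdiffcard : ∀ S : Γ.Subgraph, (I S \ {0}).ncard ≤ (J S).ncard := by
    intro S
    have := Set.ncard_le_ncard (hsub S) (Set.toFinite _)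
    rwa [Set.ncard_image_of_injective _ (Fin.castSucc_injective _)] at this
  have hcard : ∀ S : Γ.Subgraph, (I S).ncard ≤ (J S).ncard + 1 := by
    intro S
    have h1 : (I S).ncard ≤ (I S \ {0}).ncard + 1 := by
      have : I S ⊆ (I S \ {0}) ∪ {0} := by
        intro i hi; by_cases h : i = 0
        · exact Or.inr (by simp [h])
        · exact Or.inl ⟨hi, by simpa using h⟩
      calc (I S).ncard ≤ ((I S \ {0}) ∪ {0}).ncard :=
            Set.ncard_le_ncard this (Set.toFinite _)
        _ ≤ (I S \ {0}).ncard + ({0} : Set (Fin (t+1))).ncard := Set.ncard_union_le _ _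
        _ = (I S \ {0}).ncard + 1 := by rw [Set.ncard_singleton]
    exact le_trans h1 (by have := hdiffcard S; omega)
  constructor
  · -- forward: safety implies α < t/(t+1)
    intro hsafe
    have hi1 : (⟨1, by omega⟩ : Fin (t + 2)) ≠ 0 := by
      intro h; have := congrArg Fin.val h; simp at this
    have hi1l : (⟨1, by omega⟩ : Fin (t + 2)) ≠ Fin.last (t + 1) := by
      intro h; have := congrArg Fin.val h; simp [hlastval] at this; omega
    have hHneG : H ≠ G := by
      intro h
      have hg : q ⟨1, by omega⟩ ∈ G.verts := by
        rw [hverts]; exact Or.inr ⟨_, rfl⟩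
      exact hnew _ hi1 hi1l (h ▸ hg)
    have hpos := hsafe G (lt_of_le_of_ne hHG hHneG) le_rfl
    rw [hff G le_rfl] at hpos
    have hJG : J G = Set.univ \ {0, Fin.last (t + 1)} := by
      ext i
      simp only [hJ, Set.mem_setOf_eq, Set.mem_diff, Set.mem_univ, true_and,
        Set.mem_insert_iff, Set.mem_singleton_iff, not_or]
      constructor
      · rintro ⟨-, h1, h2⟩; exact ⟨h1, h2⟩
      · rintro ⟨h1, h2⟩
        exact ⟨by rw [hverts]; exact Or.inr ⟨i, rfl⟩, h1, h2⟩
    have hJGcard : (J G).ncard = t := by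
      rw [hJG, Set.ncard_diff (Set.subset_univ _), Set.ncard_univ,
        Set.ncard_pair h0last, Nat.card_eq_fintype_card, Fintype.card_fin]
      omega
    have hIG : I G = Set.univ := by
      ext i
      simp only [hI, Set.mem_setOf_eq, Set.mem_univ, iff_true]
      rw [hedges]; exact Or.inr ⟨i, rfl⟩
    have hIGcard : (I G).ncard = t + 1 := by
      rw [hIG, Set.ncard_univ, Nat.card_eq_fintype_card, Fintype.card_fin]
    rw [hJGcard, hIGcard] at hpos
    rw [lt_div_iff₀ (by positivity)]
    push_cast at hpos ⊢
    linarith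
  · -- backward
    intro hα S hHS hSG
    rw [hff S hSG]
    by_cases hmk : (I S).ncard = (J S).ncard + 1
    · -- the whole path case
      have h0I : (0 : Fin (t + 1)) ∈ I S := by
        by_contra h0
        have hd := hdiffcard S
        rw [Set.diff_singleton_eq_self h0] at hd
        omega
      have hdiffeq : (I S \ {0}).ncard = (J S).ncard := by
        have := Set.ncard_diff_singleton_of_mem h0I
        have hd := hdiffcard S
        omega
      have himg : Fin.castSucc '' (I S \ {0}) = J S := by
        refine Set.eq_of_subset_of_ncard_le (hsub S) ?_ (Set.toFinite _)
        rw [Set.ncard_image_of_injective _ (Fin.castSucc_injective _), hdiffeq]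
      have hall : ∀ n : ℕ, ∀ hn : n < t + 1, (⟨n, hn⟩ : Fin (t + 1)) ∈ I S := by
        intro n
        induction n with
        | zero =>
          intro hn
          have : (⟨0, hn⟩ : Fin (t + 1)) = 0 := by ext; simp
          rw [this]; exact h0I
        | succ n ih =>
          intro hn
          have hnlt : n < t + 1 := by omega
          have hprev := ih hnlt
          have hvJ : (⟨n + 1, by omega⟩ : Fin (t + 2)) ∈ J S := by
            refine ⟨?_, ?_, ?_⟩
            · have h2 := (hend S _ hprev).2
              have : (⟨n, hnlt⟩ : Fin (t + 1)).succ = ⟨n + 1, by omega⟩ := by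
                ext; simp [Fin.val_succ]
              rwa [this] at h2
            · intro h; have := congrArg Fin.val h; simp at this
            · intro h; have := congrArg Fin.val h; simp [hlastval] at this; omega
          rw [← himg] at hvJ
          obtain ⟨i, ⟨hiI, -⟩, hieq⟩ := hvJ
          have : i = ⟨n + 1, hn⟩ := Fin.ext (by simpa using congrArg Fin.val hieq)
          rwa [this] at hiI
      have hIuniv : I S = Set.univ := by
        ext i
        simp only [Set.mem_univ, iff_true]
        have := hall i.val i.isLt
        simpa [Fin.eta] using this
      have hIcard : (I S).ncard = t + 1 := by
        rw [hIuniv, Set.ncard_univ, Nat.card_eq_fintype_card, Fintype.card_fin]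
      have hJcard : (J S).ncard = t := by omega
      rw [hIcard, hJcard]
      rw [lt_div_iff₀ (by positivity)] at hα
      push_cast
      linarith
    · -- strictly fewer edges
      have hm : (I S).ncard ≤ (J S).ncard := by have := hcard S; omega
      have hk : 1 ≤ (J S).ncard := by
        have hne : (J S).Nonempty := by
          rcases (I S).eq_empty_or_nonempty with hIe | ⟨i, hiI⟩
          · by_contra hJe
            rw [Set.not_nonempty_iff_eq_empty] at hJe
            have hSH : S ≤ H := by
              constructor
              · intro v hv
                have hvG : v ∈ G.verts := hSG.1 hv
                rw [hverts] at hvG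
                rcases hvG with h | ⟨i, rfl⟩
                · exact h
                by_cases h0 : i = 0
                · rwa [h0]
                by_cases hl : i = Fin.last (t + 1)
                · rwa [hl]
                exact absurd (show i ∈ J S from ⟨hv, h0, hl⟩) (by rw [hJe]; simp)
              · intro u v huv
                have hes : s(u, v) ∈ S.edgeSet := huv
                have heg : s(u, v) ∈ G.edgeSet := (SimpleGraph.Subgraph.edgeSet_mono hSG) hes
                rw [hedges] at heg
                rcases heg with h | ⟨i, hieq⟩
                · exact h
                · exfalso
                  have : i ∈ I S := by rw [hI]; simp only [Set.mem_setOf_eq, he]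
                                       rw [← hieq]; exact hes
                  rw [hIe] at this; exact this
            exact hHS.ne (le_antisymm hHS.le hSH)
          · by_cases hi0 : i = 0
            · refine ⟨i.succ, (hend S i hiI).2, Fin.succ_ne_zero _, ?_⟩
              intro h
              have hival : i.val = 0 := by rw [hi0]; rfl
              have := congrArg Fin.val h
              simp [Fin.val_succ, hival, hlastval] at this
              omega
            · exact ⟨i.castSucc, hcastmem S i hiI hi0⟩
        exact (Set.ncard_pos (Set.toFinite _)).mpr hne
      have hmr : ((I S).ncard : ℝ) ≤ ((J S).ncard : ℝ) := Nat.cast_le.mpr hm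
      have hkr : (1 : ℝ) ≤ ((J S).ncard : ℝ) := by exact_mod_cast hk
      nlinarith
end

section
/- Let m ≥ 2 and suppose ρ is a rational number with 1 < ρ < m/(m−1) that is NOT of the form 1 + 1/(m − 1 + b/a) for any natural numbers a ≥ 1 and 1 ≤ b ≤ m. Then for all natural numbers t ≥ 2 and v_1, …, v_t with 1 ≤ v_i ≤ m − 1, setting S = v_1 + ⋯ + v_t, one has (S + t)/(1 + S) ≠ ρ. -/
/-!
Write `S` for the sum and `a = t - 1`. Then `(S + t)/(1 + S) = 1 + 1/((1 + S)/a)`, and splitting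
`1 + S = (m - 1)a + b` gives the canonical form `1 + 1/((m - 1) + b/a)`. The density bound
`ρ < m/(m - 1)` is equivalent to `b > 0`, and `v i ≤ m - 1` gives `S ≤ (m - 1)t`, i.e. `b ≤ m`;
so `ρ` would lie in the exceptional set.
-/

section Field

variable {K : Type*} [Field K]

theorem add_div_one_add_eq_one_add_one_div (c S t : K) (ht : t ≠ 1) (hS : 1 + S ≠ 0) :
    (S + t) / (1 + S) = 1 + 1 / (c + (1 + S - c * (t - 1)) / (t - 1)) := by
  have ht' : t - 1 ≠ 0 := sub_ne_zero.mpr ht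
  rw [add_div' _ _ _ ht', add_sub_cancel, one_div_div, eq_comm, one_add_div hS]
  ring_nf

end Field

section LinearOrderedField

variable {K : Type*} [Field K] [LinearOrder K] [IsStrictOrderedRing K]

theorem add_div_one_add_lt_div_sub_one_iff {m S t : K} (hm : 1 < m) (hS : 0 < 1 + S) :
    (S + t) / (1 + S) < m / (m - 1) ↔ (m - 1) * (t - 1) < 1 + S := by
  rw [div_lt_div_iff₀ hS (sub_pos.mpr hm)]
  constructor <;> intro h <;> linarith

end LinearOrderedField

theorem exists_canonical_form_of_lt {m t S : ℕ} (hm : 2 ≤ m) (ht : 2 ≤ t) (hS : S ≤ t * (m - 1))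
    (hlt : ((S : ℚ) + t) / (1 + S) < m / (m - 1)) :
    ∃ a b : ℕ, 1 ≤ a ∧ 1 ≤ b ∧ b ≤ m ∧
      ((S : ℚ) + t) / (1 + S) = 1 + 1 / (((m : ℚ) - 1) + (b : ℚ) / a) := by
  have hm' : (1 : ℚ) < m := by exact_mod_cast hm
  have hpos : (0 : ℚ) < 1 + S := by positivity
  have hb : (m - 1) * (t - 1) < 1 + S := by
    have := (add_div_one_add_lt_div_sub_one_iff hm' hpos).mp hlt
    rw [← Nat.cast_pred (by omega), ← Nat.cast_pred (by omega)] at this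
    exact_mod_cast this
  have hS' : S + 1 ≤ (m - 1) * (t - 1) + m := by
    obtain ⟨t', rfl⟩ : ∃ t', t = t' + 1 := ⟨t - 1, by omega⟩
    rw [Nat.add_sub_cancel, Nat.mul_comm]
    rw [Nat.add_mul, one_mul] at hS
    omega
  refine ⟨t - 1, 1 + S - (m - 1) * (t - 1), by omega, by omega, by omega, ?_⟩
  rw [Nat.cast_sub hb.le, Nat.cast_mul, Nat.cast_pred (by omega), Nat.cast_pred (by omega)]
  push_cast
  exact add_div_one_add_eq_one_add_one_div _ _ _ (by exact_mod_cast (by omega : t ≠ 1)) hpos.ne'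

theorem stmt16_general (m : ℕ) (hm : 2 ≤ m) (ρ : ℚ)
    (h2 : ρ < (m : ℚ) / ((m : ℚ) - 1))
    (hnot : ¬ ∃ a b : ℕ, 1 ≤ a ∧ 1 ≤ b ∧ b ≤ m ∧
      ρ = 1 + 1 / (((m : ℚ) - 1) + (b : ℚ) / a)) :
    ∀ t : ℕ, 2 ≤ t → ∀ v : Fin t → ℕ, (∀ i, 1 ≤ v i ∧ v i ≤ m - 1) →
      (((∑ i, v i : ℕ) : ℚ) + t) / (1 + ((∑ i, v i : ℕ) : ℚ)) ≠ ρ := by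
  rintro t ht v hv rfl
  have hS : ∑ i, v i ≤ t * (m - 1) := by
    simpa using Finset.sum_le_card_nsmul Finset.univ v (m - 1) fun i _ => (hv i).2
  exact hnot (exists_canonical_form_of_lt hm ht hS h2)

theorem stmt16 (m : ℕ) (hm : 2 ≤ m) (ρ : ℚ) (h1 : 1 < ρ)
    (h2 : ρ < (m : ℚ) / ((m : ℚ) - 1))
    (hnot : ¬ ∃ a b : ℕ, 1 ≤ a ∧ 1 ≤ b ∧ b ≤ m ∧
      ρ = 1 + 1 / (((m : ℚ) - 1) + (b : ℚ) / a)) :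
    ∀ t : ℕ, 2 ≤ t → ∀ v : Fin t → ℕ, (∀ i, 1 ≤ v i ∧ v i ≤ m - 1) →
      (((∑ i, v i : ℕ) : ℚ) + t) / (1 + ((∑ i, v i : ℕ) : ℚ)) ≠ ρ :=
  stmt16_general m hm ρ h2 hnot
end
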